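/- arXiv:2408.03686 — 2 statements merged into one kernel-verified Lean document; each statement's English description precedes it below -/
import Mathlib

section
/- If E is Archimedean and (a_n) is an order-null sequence in E with at least one nonzero term, then the set {(λ a_n)_n : λ ∈ ℝ} of all scalar multiples is not collective order-null. -/
/-- `p ↓ 0` : `p` is decreasing with infimum `0`. -/
def DownToZero {E : Type*} [Lattice E] [AddCommGroup E] (p : ℕ → E) : Prop :=
  Antitone p ∧ IsGLB (Set.range p) 0

/-- a set of sequences is collective order-null. -/
def CollOrderNull {E : Type*} [Lattice E] [AddCommGroup E] (𝒜 : Set (ℕ → E)) : Prop :=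
  ∃ p : ℕ → E, DownToZero p ∧ ∀ a ∈ 𝒜, ∀ n, |a n| ≤ p n

/-- in an Archimedean vector lattice, the set of all scalar
multiples of an order-null sequence having a nonzero term is not collective
order-null. -/
theorem scalar_multiples_not_coll_null
    {E : Type*} [Lattice E] [AddCommGroup E] [Module ℝ E]
    [CovariantClass E E (· + ·) (· ≤ ·)]
    (harch : ∀ x y : E, (∀ n : ℕ, n • x ≤ y) → x ≤ 0)
    (a : ℕ → E)
    (hnull : ∃ p : ℕ → E, DownToZero p ∧ ∀ n, |a n| ≤ p n)
    (hne : ∃ m, a m ≠ 0) :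
    ¬ CollOrderNull {s : ℕ → E | ∃ lam : ℝ, s = fun n => lam • a n} := by
  rintro ⟨q, _, hq⟩
  obtain ⟨m, hm⟩ := hne
  have key : ∀ lam : ℝ, lam • a m ≤ q m := fun lam =>
    le_trans (le_abs_self _) (hq (fun n => lam • a n) ⟨lam, rfl⟩ m)
  have h1 : a m ≤ 0 := harch _ (q m) fun n => by
    rw [← Nat.cast_smul_eq_nsmul ℝ]; exact key n
  have h2 : -a m ≤ 0 := harch _ (q m) fun n => by
    rw [← Nat.cast_smul_eq_nsmul ℝ, smul_neg, ← neg_smul]; exact key _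
  exact hm (le_antisymm h1 (neg_nonpos.mp h2))
end

section
/- In a Banach lattice E, if p_{i,n} ∈ B_E with p_{i,n} ↓ 0 in n for each fixed i, and (α_i) is an absolutely summable real sequence, then the sequence p_n := Σ_{i=1}^∞ |α_i| p_{i,n} (norm-convergent series) satisfies p_n ↓ 0. -/
open Filter Topology

lemma nsmul_nonneg_of_pow_two_nsmul_nonneg {α : Type*} [Lattice α] [AddCommGroup α]
    [IsOrderedAddMonoid α] {a : α} : ∀ k : ℕ, 0 ≤ 2 ^ k • a → 0 ≤ a
  | 0, h => by simpa using h
  | k + 1, h => by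
    rw [pow_succ, mul_nsmul] at h
    exact nsmul_nonneg_of_pow_two_nsmul_nonneg k (nsmul_two_semiclosed h)

instance posSMulMono_of_orderClosedTopology {E : Type*} [AddCommGroup E] [Lattice E]
    [IsOrderedAddMonoid E] [TopologicalSpace E] [OrderClosedTopology E] [Module ℝ E]
    [ContinuousSMul ℝ E] : PosSMulMono ℝ E := by
  refine .of_smul_nonneg fun c hc x hx => ?_
  -- `c` is a limit of nonnegative dyadic rationals, and the positive cone is closed.
  have hdyadic : ∀ m k : ℕ, 0 ≤ ((m : ℝ) / 2 ^ k) • x := fun m k =>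
    nsmul_nonneg_of_pow_two_nsmul_nonneg k <| by
      rw [← Nat.cast_smul_eq_nsmul ℝ, smul_smul]
      push_cast
      rw [mul_div_cancel₀ _ (by positivity), Nat.cast_smul_eq_nsmul]
      exact nsmul_nonneg hx m
  have hlim : Tendsto (fun k : ℕ => (⌊c * 2 ^ k⌋₊ : ℝ) / 2 ^ k) atTop (𝓝 c) :=
    (tendsto_nat_floor_mul_div_atTop hc).comp
      (tendsto_pow_atTop_atTop_of_one_lt one_lt_two)
  exact isClosed_Ici.mem_of_tendsto (hlim.smul_const x)
    (Eventually.of_forall fun k => hdyadic _ k)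

namespace DownToZero

variable {E : Type*} [Lattice E] [AddCommGroup E] {p : ℕ → E}

lemma nonneg (hp : DownToZero p) (n : ℕ) : 0 ≤ p n :=
  hp.2.1 ⟨n, rfl⟩

lemma const_smul {𝕜 : Type*} [Field 𝕜] [LinearOrder 𝕜] [IsStrictOrderedRing 𝕜] [Module 𝕜 E]
    [PosSMulMono 𝕜 E] (hp : DownToZero p) {c : 𝕜} (hc : 0 ≤ c) :
    DownToZero fun n => c • p n := by
  refine ⟨fun m n h => smul_le_smul_of_nonneg_left (hp.1 h) hc, ?_, fun a ha => ?_⟩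
  · rintro _ ⟨n, rfl⟩
    exact smul_nonneg hc (hp.nonneg n)
  rcases hc.eq_or_lt with rfl | hc
  · simpa using ha ⟨0, rfl⟩
  have : c⁻¹ • a ≤ 0 := hp.2.2 <| by
    rintro _ ⟨n, rfl⟩
    exact (inv_smul_le_iff_of_pos hc).2 (ha ⟨n, rfl⟩)
  simpa using (inv_smul_le_iff_of_pos hc).1 this

variable [IsOrderedAddMonoid E]

lemma le_of_forall_le_add (hp : DownToZero p) {q : ℕ → E} (hq : Antitone q) {a : E}
    (h : ∀ n, a ≤ p n + q n) (n : ℕ) : a ≤ q n := by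
  suffices a - q n ≤ 0 from sub_nonpos.1 this
  refine hp.2.2 ?_
  rintro _ ⟨k, rfl⟩
  calc a - q n ≤ a - q (max k n) := sub_le_sub_left (hq (le_max_right k n)) a
    _ ≤ p (max k n) := sub_le_iff_le_add.2 (h _)
    _ ≤ p k := hp.1 (le_max_left k n)

end DownToZero

theorem DownToZero.tsum_of_norm_le {E : Type*} [NormedAddCommGroup E] [Lattice E]
    [HasSolidNorm E] [IsOrderedAddMonoid E] [CompleteSpace E] {f : ℕ → ℕ → E} {w : ℕ → ℝ}
    (hf : ∀ i, DownToZero (f i)) (hw : Summable w) (hfw : ∀ i n, ‖f i n‖ ≤ w i) :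
    DownToZero fun n => ∑' i, f i n := by
  have hs : ∀ m n, Summable fun i => f (i + m) n := fun m n =>
    (summable_nat_add_iff m).2 (.of_norm_bounded hw fun i => hfw i n)
  have htail_anti : ∀ m, Antitone fun n => ∑' i, f (i + m) n := fun m _ _ h =>
    Summable.tsum_le_tsum (fun i => (hf _).1 h) (hs m _) (hs m _)
  have htail_nonneg : ∀ m n, 0 ≤ ∑' i, f (i + m) n := fun m n =>
    tsum_nonneg fun i => (hf _).nonneg n
  refine ⟨htail_anti 0, ?_, fun b hb => ?_⟩
  · rintro _ ⟨n, rfl⟩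
    exact htail_nonneg 0 n
  have hb_tail : ∀ m n, b ⊔ 0 ≤ ∑' i, f (i + m) n := by
    intro m
    induction m with
    | zero => exact fun n => sup_le (hb ⟨n, rfl⟩) (htail_nonneg 0 n)
    | succ m ih =>
      refine (hf m).le_of_forall_le_add (htail_anti (m + 1)) fun n => ?_
      simpa only [(hs m n).tsum_eq_zero_add, zero_add, add_right_comm _ 1 m, add_assoc]
        using ih n
  have hnorm : ∀ m, ‖b ⊔ 0‖ ≤ ∑' i, w (i + m) := fun m =>
    (norm_le_norm_of_abs_le_abs <| by
      rw [abs_of_nonneg le_sup_right, abs_of_nonneg (htail_nonneg m 0)]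
      exact hb_tail m 0).trans
    (tsum_of_norm_bounded ((summable_nat_add_iff m).2 hw).hasSum fun i => hfw _ 0)
  have : b ⊔ 0 = 0 := norm_le_zero_iff.1 (ge_of_tendsto' (tendsto_sum_nat_add w) hnorm)
  exact le_sup_left.trans this.le

/-- in a Banach lattice, if `p_{i,·} ∈ B_E` with `p_{i,n} ↓_n 0`
for each `i` and `(α_i)` is absolutely summable, then
`p_n := Σ_i |α_i| p_{i,n}` satisfies `p_n ↓ 0`. -/
theorem weighted_sum_down_to_zero
    {E : Type*} [NormedAddCommGroup E] [Lattice E] [HasSolidNorm E] [IsOrderedAddMonoid E]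
    [NormedSpace ℝ E] [CompleteSpace E]
    (p : ℕ → ℕ → E) (hball : ∀ i n, ‖p i n‖ ≤ 1)
    (hdown : ∀ i, DownToZero (fun n => p i n))
    (α : ℕ → ℝ) (hsum : Summable fun i => |α i|) :
    DownToZero (fun n => ∑' i, |α i| • p i n) :=
  DownToZero.tsum_of_norm_le (fun i => (hdown i).const_smul (abs_nonneg (α i))) hsum
    fun i n => by
      rw [norm_smul, Real.norm_eq_abs, abs_abs]
      exact mul_le_of_le_one_right (abs_nonneg _) (hball i n)
end
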